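/- arXiv:1308.1897 — 2 statements merged into one kernel-verified Lean document; each statement's English description precedes it below -/
import Mathlib

section
/- Let X be a Banach space and P, Q hermitian idempotents in L(X). If R(P) = R(Q) then P = Q. -/
/-!
Since `R(P) = R(Q)`, we have `PQ = Q` and `QP = P`, so `N = Q - P` satisfies `N² = 0` and
`(1 - 2P)(1 - 2Q) = 1 + 2N`. For a hermitian idempotent `P`, `1 - 2P = exp(iπP)` has norm one, so
`‖1 + 2N‖ ≤ 1`. But then the powers `(1 + 2N)ⁿ = 1 + 2nN` stay bounded, which forces `N = 0`.
-/

/-- An element `h` of a complex normed algebra is hermitian if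
`‖exp(i t h)‖ = 1` for all real `t`. -/
def IsHermitian {A : Type*} [NormedRing A] [NormedAlgebra ℂ A] (h : A) : Prop :=
  ∀ t : ℝ, ‖NormedSpace.exp (((Complex.I * t) : ℂ) • h)‖ = 1

/-- `x` is a Moore-Penrose inverse of `a`: `a = axa`, `x = xax`, and
`ax`, `xa` are hermitian. -/
def IsMoorePenrose {A : Type*} [NormedRing A] [NormedAlgebra ℂ A] (a x : A) : Prop :=
  a = a * x * a ∧ x = x * a * x ∧ IsHermitian (a * x) ∧ IsHermitian (x * a)

open NormedSpace
open scoped Nat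

theorem one_add_pow_of_mul_self_eq_zero {R : Type*} [Semiring R] {N : R} (hN : N * N = 0)
    (n : ℕ) : (1 + N) ^ n = 1 + n • N := by
  induction n with
  | zero => simp
  | succ n ih =>
    simp only [pow_succ, ih, add_mul, mul_add, one_mul, mul_one, smul_mul_assoc, hN, smul_zero,
      succ_nsmul]
    abel

theorem eq_zero_of_mul_self_eq_zero_of_norm_one_add_le_one {A : Type*} [NormedRing A]
    [NormedSpace ℝ A] {N : A} (hN : N * N = 0) (h : ‖1 + N‖ ≤ 1) : N = 0 := by
  have hbound (n : ℕ) : (n + 1 : ℝ) * ‖N‖ ≤ 1 + ‖(1 : A)‖ :=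
    calc (n + 1 : ℝ) * ‖N‖ = ‖(1 + N) ^ (n + 1) - 1‖ := by
          rw [one_add_pow_of_mul_self_eq_zero hN, add_sub_cancel_left, RCLike.norm_nsmul ℝ,
            nsmul_eq_mul]
          push_cast
          ring
      _ ≤ ‖(1 + N) ^ (n + 1)‖ + ‖(1 : A)‖ := norm_sub_le _ _
      _ ≤ ‖1 + N‖ ^ (n + 1) + ‖(1 : A)‖ := by gcongr; exact norm_pow_le' _ n.succ_pos
      _ ≤ 1 + ‖(1 : A)‖ := by gcongr; exact pow_le_one₀ (norm_nonneg _) h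
  by_contra hne
  have hpos : 0 < ‖N‖ := norm_pos_iff.mpr hne
  obtain ⟨n, hn⟩ := exists_nat_gt ((1 + ‖(1 : A)‖) / ‖N‖)
  rw [div_lt_iff₀ hpos] at hn
  nlinarith [hbound n]

section Idempotent

variable {A : Type*} [NormedRing A] [NormedAlgebra ℂ A] {p : A}

theorem IsIdempotentElem.exp_smul [CompleteSpace A] (hp : IsIdempotentElem p) (c : ℂ) :
    exp (c • p) = (1 - p) + Complex.exp c • p := by
  have hterm (n : ℕ) : ((n ! : ℂ)⁻¹) • (c • p) ^ n =
      (Pi.single 0 (1 - p) : ℕ → A) n + ((n ! : ℂ)⁻¹ * c ^ n) • p := by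
    rcases n with _ | n
    · simp
    · simp [smul_pow, hp.pow_succ_eq, smul_smul]
  have hc : HasSum (fun n : ℕ ↦ (n ! : ℂ)⁻¹ * c ^ n) (Complex.exp c) := by
    simpa [Complex.exp_eq_exp_ℂ] using exp_series_hasSum_exp' (𝕂 := ℂ) c
  refine (exp_series_hasSum_exp' (𝕂 := ℂ) (c • p)).unique ?_
  simp_rw [hterm]
  exact (hasSum_pi_single 0 (1 - p)).add (hc.smul_const p)

theorem IsHermitian.norm_one_sub_two_smul [CompleteSpace A] (hp : IsIdempotentElem p)
    (hh : IsHermitian p) : ‖1 - (2 : ℂ) • p‖ = 1 := by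
  have hexp : exp ((Complex.I * Real.pi : ℂ) • p) = 1 - (2 : ℂ) • p := by
    rw [hp.exp_smul, mul_comm, Complex.exp_pi_mul_I]
    module
  rw [← hexp, hh]

end Idempotent

theorem ContinuousLinearMap.IsIdempotentElem.mul_eq_right_iff {R M : Type*} [Ring R]
    [TopologicalSpace M] [AddCommGroup M] [Module R M] {p : M →L[R] M}
    (hp : IsIdempotentElem p) (q : M →L[R] M) : p * q = q ↔ q.range ≤ p.range := by
  rw [← LinearMap.IsIdempotentElem.comp_eq_right_iff (IsIdempotentElem.toLinearMap hp),
    ← ContinuousLinearMap.coe_inj]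
  rfl

/-- Hermitian idempotents with the same range are equal. -/
theorem hermitian_idempotent_ext_range {X : Type*} [NormedAddCommGroup X]
    [NormedSpace ℂ X] [CompleteSpace X] (P Q : X →L[ℂ] X)
    (hP : IsIdempotentElem P) (hP' : IsHermitian P)
    (hQ : IsIdempotentElem Q) (hQ' : IsHermitian Q)
    (h : LinearMap.range (P : X →ₗ[ℂ] X) = LinearMap.range (Q : X →ₗ[ℂ] X)) : P = Q := by
  have hPQ : P * Q = Q := (ContinuousLinearMap.IsIdempotentElem.mul_eq_right_iff hP Q).2 h.ge
  have hQP : Q * P = P := (ContinuousLinearMap.IsIdempotentElem.mul_eq_right_iff hQ P).2 h.le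
  have hsq : ((2 : ℂ) • (Q - P)) * ((2 : ℂ) • (Q - P)) = 0 := by
    simp [mul_sub, sub_mul, hP.eq, hQ.eq, hPQ, hQP]
  have hprod : 1 + (2 : ℂ) • (Q - P) = (1 - (2 : ℂ) • P) * (1 - (2 : ℂ) • Q) := by
    simp only [mul_sub, sub_mul, one_mul, mul_one, smul_mul_smul, hPQ]
    module
  have hnorm : ‖1 + (2 : ℂ) • (Q - P)‖ ≤ 1 := by
    rw [hprod]
    refine (norm_mul_le _ _).trans ?_
    rw [hP'.norm_one_sub_two_smul hP, hQ'.norm_one_sub_two_smul hQ, one_mul]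
  have hzero := eq_zero_of_mul_self_eq_zero_of_norm_one_add_le_one hsq hnorm
  rw [smul_eq_zero, sub_eq_zero] at hzero
  exact (hzero.resolve_left two_ne_zero).symm
end

section
/- Let X be a Banach space and let S, T ∈ L(X) be EP operators such that ST has a Moore-Penrose inverse. If N(ST) = N(S) + N(T) and R(ST) = R(S) ∩ R(T), then ST is EP. -/
/-!
A hermitian idempotent `p` satisfies `‖1 - 2p‖ = ‖exp(iπp)‖ = 1`. If `p`, `q` are two such
idempotents with `pq = q`, then `u = (1 - 2p)(1 - 2q)` is a contraction with
`u² = 1 - 4n`, where `n = qp - q` satisfies `n² = 0`; the powers `(u²)^k = 1 - 4kn` stay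
bounded only if `n = 0`. So for hermitian idempotents `R(q) ⊆ R(p)` forces `N(p) ⊆ N(q)`, and
dually `N(q) ⊆ N(p)` forces `R(p) ⊆ R(q)`.

Apply this to the hermitian idempotents `P = (ST)R`, `Q = R(ST)`, `SS'` and `TT'`, whose ranges
and kernels are those of `ST`, `S` and `T` (for `SS' = S'S`, `TT' = T'T` this uses the EP
property). Then `N(Q) = N(S) + N(T) ⊆ N(P)` and `R(Q) ⊆ R(S) ∩ R(T) = R(P)`, so `P = Q`.
-/

section Semigroup

variable {R : Type*} [Semigroup R] {a x : R}

theorem isIdempotentElem_mul_of_mul_mul_eq (h : a * x * a = a) : IsIdempotentElem (a * x) := by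
  rw [IsIdempotentElem, ← mul_assoc, h]

theorem isIdempotentElem_mul_of_mul_mul_eq' (h : a * x * a = a) : IsIdempotentElem (x * a) := by
  rw [IsIdempotentElem, mul_assoc, ← mul_assoc a, h]

end Semigroup

section NormedAlgebra

variable {A : Type*} [NormedRing A] [NormedAlgebra ℂ A]

theorem exp_smul_of_isIdempotentElem {g : A} (hg : IsIdempotentElem g) (c : ℂ) :
    NormedSpace.exp (c • g) = Complex.exp c • g + (1 - g) := by
  have hexp (z : ℂ) :
      HasSum (fun n => (n.factorial⁻¹ : ℂ) * z ^ n) (Complex.exp z) := by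
    simpa only [Complex.exp_eq_exp_ℂ, smul_eq_mul] using
      NormedSpace.exp_series_hasSum_exp' (𝕂 := ℂ) z
  -- the `0 ^ n` part only contributes at `n = 0`, where `g + (1 - g) = (c • g) ^ 0`
  have hterm (n : ℕ) : (n.factorial⁻¹ : ℂ) • (c • g) ^ n =
      ((n.factorial⁻¹ : ℂ) * c ^ n) • g + ((n.factorial⁻¹ : ℂ) * 0 ^ n) • (1 - g) := by
    cases n with
    | zero => simp
    | succ n => simp [smul_pow, hg.pow_succ_eq, mul_smul]
  have hsum : HasSum (fun n => (n.factorial⁻¹ : ℂ) • (c • g) ^ n)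
      (Complex.exp c • g + (1 - g)) := by
    simpa only [hterm, Complex.exp_zero, one_smul] using
      ((hexp c).smul_const g).add ((hexp 0).smul_const (1 - g))
  rw [NormedSpace.exp_eq_tsum ℂ]
  exact hsum.tsum_eq

theorem IsHermitian.norm_one_sub_two_mul {g : A} (hherm : IsHermitian g)
    (hg : IsIdempotentElem g) : ‖1 - 2 * g‖ = 1 := by
  have h := hherm Real.pi
  rwa [exp_smul_of_isIdempotentElem hg, mul_comm, Complex.exp_pi_mul_I,
    show (-1 : ℂ) • g + (1 - g) = 1 - 2 * g by rw [neg_one_smul]; noncomm_ring] at h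

theorem eq_zero_of_mul_self_eq_zero_of_norm_one_sub_le {d : A} (hd : d * d = 0)
    (h : ‖1 - d‖ ≤ 1) : d = 0 := by
  have hpow (n : ℕ) : (1 - d) ^ n = 1 - n • d := by
    induction n with
    | zero => simp
    | succ n ih =>
      rw [pow_succ, ih, succ_nsmul]
      have : (n • d) * d = 0 := by rw [smul_mul_assoc, hd, smul_zero]
      noncomm_ring [this]
  have hbound (n : ℕ) : (n + 1 : ℝ) * ‖d‖ ≤ ‖(1 : A)‖ + 1 :=
    calc (n + 1 : ℝ) * ‖d‖ = ‖1 - (1 - d) ^ (n + 1)‖ := by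
          rw [hpow, sub_sub_cancel, ← Nat.cast_smul_eq_nsmul ℂ, norm_smul, Complex.norm_natCast]
          push_cast; rfl
      _ ≤ ‖(1 : A)‖ + ‖(1 - d) ^ (n + 1)‖ := norm_sub_le _ _
      _ ≤ ‖(1 : A)‖ + 1 := by
          gcongr
          exact (norm_pow_le' _ n.succ_pos).trans (pow_le_one₀ (norm_nonneg _) h)
  by_contra hne
  have hpos : 0 < ‖d‖ := norm_pos_iff.mpr hne
  obtain ⟨n, hn⟩ := exists_nat_gt ((‖(1 : A)‖ + 1) / ‖d‖)
  rw [div_lt_iff₀ hpos] at hn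
  nlinarith [hbound n]

theorem IsIdempotentElem.mul_eq_left_of_mul_eq_right {p q : A} (hp : IsIdempotentElem p)
    (hq : IsIdempotentElem q) (hp₁ : ‖1 - 2 * p‖ ≤ 1) (hq₁ : ‖1 - 2 * q‖ ≤ 1)
    (h : p * q = q) : q * p = q := by
  have hn : (q * p - q) * (q * p - q) = 0 := by
    have hqpq : q * p * q = q := by rw [mul_assoc, h, hq.eq]
    calc (q * p - q) * (q * p - q) = q * p * q * p - q * p * q - q * q * p + q * q := by
          noncomm_ring
      _ = 0 := by rw [hqpq, hq.eq]; noncomm_ring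
  have hu : (1 - 2 * p) * (1 - 2 * q) = 1 - 2 * p + 2 * q := by
    calc (1 - 2 * p) * (1 - 2 * q) = 1 - 2 * p - 2 * q + 4 * (p * q) := by noncomm_ring
      _ = 1 - 2 * p + 2 * q := by rw [h]; noncomm_ring
  have huu : (1 - 2 * p + 2 * q) * (1 - 2 * p + 2 * q) = 1 - (4 : ℂ) • (q * p - q) := by
    calc (1 - 2 * p + 2 * q) * (1 - 2 * p + 2 * q)
        = 1 - 4 * p + 4 * q + 4 * (p * p) - 4 * (p * q) - 4 * (q * p) + 4 * (q * q) := by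
          noncomm_ring
      _ = 1 - (4 : ℂ) • (q * p - q) := by
          rw [hp.eq, hq.eq, h, ofNat_smul_eq_nsmul ℂ 4, nsmul_eq_mul, Nat.cast_ofNat]
          noncomm_ring
  have hnorm : ‖1 - (4 : ℂ) • (q * p - q)‖ ≤ 1 := by
    have hu₁ : ‖(1 - 2 * p) * (1 - 2 * q)‖ ≤ 1 :=
      (norm_mul_le_of_le hp₁ hq₁).trans (one_mul 1).le
    rw [← huu, ← hu]
    exact (norm_mul_le _ _).trans (mul_le_one₀ hu₁ (norm_nonneg _) hu₁)
  have h4n := eq_zero_of_mul_self_eq_zero_of_norm_one_sub_le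
    (by rw [smul_mul_smul_comm, hn, smul_zero]) hnorm
  exact sub_eq_zero.mp ((smul_eq_zero.mp h4n).resolve_left (by norm_num))

theorem IsIdempotentElem.mul_eq_right_of_mul_eq_left {p q : A} (hp : IsIdempotentElem p)
    (hq : IsIdempotentElem q) (hp₁ : ‖1 - 2 * p‖ ≤ 1) (hq₁ : ‖1 - 2 * q‖ ≤ 1)
    (h : p * q = p) : q * p = p := by
  have hcompl (r : A) : 1 - 2 * (1 - r) = -(1 - 2 * r) := by noncomm_ring
  have h' : (1 - p) * (1 - q) = 1 - q := by
    calc (1 - p) * (1 - q) = 1 - q - p + p * q := by noncomm_ring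
      _ = 1 - q := by rw [h]; abel
  have key := hp.one_sub.mul_eq_left_of_mul_eq_right hq.one_sub
    (by rwa [hcompl, norm_neg]) (by rwa [hcompl, norm_neg]) h'
  calc q * p = (1 - q) * (1 - p) - 1 + p + q := by noncomm_ring
    _ = p := by rw [key]; abel

end NormedAlgebra

namespace ContinuousLinearMap

variable {X : Type*} [NormedAddCommGroup X] [NormedSpace ℂ X] {p q : X →L[ℂ] X}

theorem range_le_range_iff_mul_eq (hp : IsIdempotentElem p) :
    q.range ≤ p.range ↔ p * q = q := by
  rw [← LinearMap.IsIdempotentElem.comp_eq_right_iff (IsIdempotentElem.toLinearMap hp),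
    ← coe_inj, toLinearMap_mul]
  rfl

theorem ker_le_ker_iff_mul_eq (hq : IsIdempotentElem q) :
    q.ker ≤ p.ker ↔ p * q = p := by
  rw [← LinearMap.IsIdempotentElem.comp_eq_left_iff (IsIdempotentElem.toLinearMap hq),
    ← coe_inj, toLinearMap_mul]
  rfl

theorem range_mul_eq_of_mul_mul_eq {a x : X →L[ℂ] X} (h : a * x * a = a) :
    (a * x).range = a.range :=
  le_antisymm (LinearMap.range_comp_le_range _ _) <|
    calc a.range = (a * x * a).range := by rw [h]
      _ ≤ (a * x).range := LinearMap.range_comp_le_range _ _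

theorem ker_mul_eq_of_mul_mul_eq {a x : X →L[ℂ] X} (h : a * x * a = a) :
    (x * a).ker = a.ker :=
  le_antisymm
    (calc (x * a).ker ≤ (a * (x * a)).ker := LinearMap.ker_le_ker_comp _ _
      _ = a.ker := by rw [← mul_assoc, h])
    (LinearMap.ker_le_ker_comp _ _)

theorem ker_le_ker_of_range_le_range (hp : IsIdempotentElem p) (hq : IsIdempotentElem q)
    (hph : IsHermitian p) (hqh : IsHermitian q) (h : q.range ≤ p.range) : p.ker ≤ q.ker :=
  (ker_le_ker_iff_mul_eq hp).2 <| hp.mul_eq_left_of_mul_eq_right hq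
    (hph.norm_one_sub_two_mul hp).le (hqh.norm_one_sub_two_mul hq).le
    ((range_le_range_iff_mul_eq hp).1 h)

theorem range_le_range_of_ker_le_ker (hp : IsIdempotentElem p) (hq : IsIdempotentElem q)
    (hph : IsHermitian p) (hqh : IsHermitian q) (h : q.ker ≤ p.ker) : p.range ≤ q.range :=
  (range_le_range_iff_mul_eq hq).2 <| hp.mul_eq_right_of_mul_eq_left hq
    (hph.norm_one_sub_two_mul hp).le (hqh.norm_one_sub_two_mul hq).le
    ((ker_le_ker_iff_mul_eq hq).1 h)

end ContinuousLinearMap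

open ContinuousLinearMap in
theorem product_EP_general {X : Type*} [NormedAddCommGroup X] [NormedSpace ℂ X]
    (S T S' T' R : X →L[ℂ] X)
    (hS : IsMoorePenrose S S') (hSEP : S * S' = S' * S)
    (hT : IsMoorePenrose T T') (hTEP : T * T' = T' * T)
    (hST : IsMoorePenrose (S * T) R)
    (hker : LinearMap.ker ((S * T : X →L[ℂ] X) : X →ₗ[ℂ] X) = LinearMap.ker (S : X →ₗ[ℂ] X) ⊔ LinearMap.ker (T : X →ₗ[ℂ] X))
    (hran : LinearMap.range ((S * T : X →L[ℂ] X) : X →ₗ[ℂ] X) = LinearMap.range (S : X →ₗ[ℂ] X) ⊓ LinearMap.range (T : X →ₗ[ℂ] X)) :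
    (S * T) * R = R * (S * T) := by
  obtain ⟨hS₁, -, hSh, -⟩ := hS
  obtain ⟨hT₁, -, hTh, -⟩ := hT
  obtain ⟨hST₁, -, hPh, hQh⟩ := hST
  have hSi := isIdempotentElem_mul_of_mul_mul_eq hS₁.symm
  have hTi := isIdempotentElem_mul_of_mul_mul_eq hT₁.symm
  have hPi := isIdempotentElem_mul_of_mul_mul_eq hST₁.symm
  have hQi := isIdempotentElem_mul_of_mul_mul_eq' hST₁.symm
  have hSker : (S * S').ker = S.ker := hSEP ▸ ker_mul_eq_of_mul_mul_eq hS₁.symm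
  have hTker : (T * T').ker = T.ker := hTEP ▸ ker_mul_eq_of_mul_mul_eq hT₁.symm
  have hSran : (S * S').range = S.range := range_mul_eq_of_mul_mul_eq hS₁.symm
  have hTran : (T * T').range = T.range := range_mul_eq_of_mul_mul_eq hT₁.symm
  have hPran : (S * T * R).range = S.range ⊓ T.range :=
    hran ▸ range_mul_eq_of_mul_mul_eq hST₁.symm
  have hQker : (R * (S * T)).ker = S.ker ⊔ T.ker :=
    hker ▸ ker_mul_eq_of_mul_mul_eq hST₁.symm
  have hker_le : (R * (S * T)).ker ≤ (S * T * R).ker := by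
    rw [hQker, ← hSker, ← hTker]
    exact sup_le
      (ker_le_ker_of_range_le_range hSi hPi hSh hPh (hPran.trans_le inf_le_left |>.trans hSran.ge))
      (ker_le_ker_of_range_le_range hTi hPi hTh hPh (hPran.trans_le inf_le_right |>.trans hTran.ge))
  have hrange_le : (R * (S * T)).range ≤ (S * T * R).range := by
    rw [hPran, ← hSran, ← hTran]
    exact le_inf
      (range_le_range_of_ker_le_ker hQi hSi hQh hSh (hSker.trans_le le_sup_left |>.trans hQker.ge))
      (range_le_range_of_ker_le_ker hQi hTi hQh hTh (hTker.trans_le le_sup_right |>.trans hQker.ge))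
  calc S * T * R = S * T * R * (R * (S * T)) := ((ker_le_ker_iff_mul_eq hQi).1 hker_le).symm
    _ = R * (S * T) := (range_le_range_iff_mul_eq hPi).1 hrange_le

/-- If `S`, `T` are EP, `ST` has a Moore-Penrose inverse,
`N(ST) = N(S) + N(T)` and `R(ST) = R(S) ∩ R(T)`, then `ST` is EP. -/
theorem product_EP {X : Type*} [NormedAddCommGroup X] [NormedSpace ℂ X] [CompleteSpace X]
    (S T S' T' R : X →L[ℂ] X)
    (hS : IsMoorePenrose S S') (hSEP : S * S' = S' * S)
    (hT : IsMoorePenrose T T') (hTEP : T * T' = T' * T)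
    (hST : IsMoorePenrose (S * T) R)
    (hker : LinearMap.ker ((S * T : X →L[ℂ] X) : X →ₗ[ℂ] X) = LinearMap.ker (S : X →ₗ[ℂ] X) ⊔ LinearMap.ker (T : X →ₗ[ℂ] X))
    (hran : LinearMap.range ((S * T : X →L[ℂ] X) : X →ₗ[ℂ] X) = LinearMap.range (S : X →ₗ[ℂ] X) ⊓ LinearMap.range (T : X →ₗ[ℂ] X)) :
    (S * T) * R = R * (S * T) :=
  product_EP_general S T S' T' R hS hSEP hT hTEP hST hker hran
end
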